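/- arXiv:1212.6631 — 3 statements merged into one kernel-verified Lean document; each statement's English description precedes it below -/
import Mathlib

section
/- Let G be a real Hilbert space, let B : G → 2^G be monotone, and let S : G → 2^G be such that S⁻¹ is at most single-valued and strictly monotone. Then the parallel sum B □ S = (B⁻¹ + S⁻¹)⁻¹ is at most single-valued, i.e., if p ∈ (B □ S)(y) and q ∈ (B □ S)(y) then p = q. -/
open scoped RealInnerProductSpace

/-- If `B` is monotone and `S⁻¹` is at most single-valued and strictly monotone,
then the parallel sum `B □ S = (B⁻¹ + S⁻¹)⁻¹` is at most single-valued. -/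
theorem stmt1 {G : Type*} [NormedAddCommGroup G] [InnerProductSpace ℝ G] [CompleteSpace G]
    (B S : G → Set G)
    (hB : ∀ x y u v, u ∈ B x → v ∈ B y → 0 ≤ ⟪x - y, u - v⟫)
    (hS1 : ∀ u x y, u ∈ S x → u ∈ S y → x = y)
    (hSstrict : ∀ u v x y, u ∈ S x → v ∈ S y → u ≠ v → 0 < ⟪u - v, x - y⟫)
    (y p q : G)
    (hp : ∃ bp ∈ {w | p ∈ B w}, ∃ sp ∈ {w | p ∈ S w}, bp + sp = y)
    (hq : ∃ bq ∈ {w | q ∈ B w}, ∃ sq ∈ {w | q ∈ S w}, bq + sq = y) :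
    p = q := by
  obtain ⟨bp, hbp, sp, hsp, hy1⟩ := hp
  obtain ⟨bq, hbq, sq, hsq, hy2⟩ := hq
  by_contra hne
  have h1 : 0 < ⟪p - q, sp - sq⟫ := hSstrict p q sp sq hsp hsq hne
  have h2 : 0 ≤ ⟪bp - bq, p - q⟫ := hB bp bq p q hbp hbq
  have hs : sp - sq = -(bp - bq) := by
    have h : bp + sp = bq + sq := by rw [hy1, hy2]
    rw [neg_sub, sub_eq_sub_iff_add_eq_add, add_comm sp bp]
    exact h
  rw [hs, inner_neg_right, real_inner_comm] at h1
  linarith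
end

section
/- Let H be a real Hilbert space, let K ≥ 1, let A : H → 2^H be maximally monotone, and for each k ∈ {1,…,K} let S_k : H → 2^H be maximally monotone such that S_k⁻¹ is at most single-valued, strictly monotone, and S_k⁻¹(0) = {0}. Set Z = (zer A) ∩ ⋂_{k=1}^K zer B_k, where B_k : H → 2^H are maximally monotone, and suppose Z ≠ ∅. Then the set of solutions x to the relaxed inclusion 0 ∈ A x + Σ_{k=1}^K (B_k □ S_k) x equals Z. -/
open scoped RealInnerProductSpace

section

variable {H : Type*} [NormedAddCommGroup H] [InnerProductSpace ℝ H]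

/-- A set-valued operator is monotone. -/
def MonoOp (A : H → Set H) : Prop :=
  ∀ x y u v, u ∈ A x → v ∈ A y → 0 ≤ ⟪x - y, u - v⟫

/-- A set-valued operator is maximally monotone. -/
def MaxMonoOp (A : H → Set H) : Prop :=
  MonoOp A ∧ ∀ B : H → Set H, MonoOp B → (∀ x, A x ⊆ B x) → ∀ x, A x = B x

/-- Inverse of a set-valued operator. -/
def opInv (A : H → Set H) (u : H) : Set H := {x | u ∈ A x}

/-- Parallel sum `A □ B = (A⁻¹ + B⁻¹)⁻¹` of two set-valued operators. -/
def parSum (A B : H → Set H) (y : H) : Set H :=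
  {p | ∃ a ∈ opInv A p, ∃ b ∈ opInv B p, a + b = y}

/-- If `Z = zer A ∩ ⋂ₖ zer Bₖ ≠ ∅`, then the solution set of the relaxed inclusion
`0 ∈ A x + Σₖ (Bₖ □ Sₖ) x` equals `Z`. -/
theorem stmt2 [CompleteSpace H] {K : ℕ} (hK : 1 ≤ K)
    (A : H → Set H) (hA : MaxMonoOp A)
    (B S : Fin K → H → Set H)
    (hB : ∀ k, MaxMonoOp (B k))
    (hS : ∀ k, MaxMonoOp (S k))
    (hS1 : ∀ k u x y, u ∈ S k x → u ∈ S k y → x = y)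
    (hSstrict : ∀ k u v x y, u ∈ S k x → v ∈ S k y → u ≠ v → 0 < ⟪u - v, x - y⟫)
    (hS0 : ∀ k, opInv (S k) 0 = {0})
    (hZ : ({x | (0 : H) ∈ A x} ∩ ⋂ k, {x | (0 : H) ∈ B k x}).Nonempty) :
    {x | ∃ p₀ ∈ A x, ∃ p : Fin K → H,
        (∀ k, p k ∈ parSum (B k) (S k) x) ∧ p₀ + ∑ k, p k = 0} =
      {x | (0 : H) ∈ A x} ∩ ⋂ k, {x | (0 : H) ∈ B k x} := by
  have h00 : ∀ k, (0 : H) ∈ S k 0 := by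
    intro k
    have : (0 : H) ∈ opInv (S k) 0 := by rw [hS0 k]; rfl
    exact this
  obtain ⟨z, hzA, hzB⟩ := hZ
  simp only [Set.mem_iInter, Set.mem_setOf_eq] at hzB
  ext x
  simp only [Set.mem_setOf_eq, Set.mem_inter_iff, Set.mem_iInter]
  constructor
  · rintro ⟨p₀, hp₀, p, hp, hsum⟩
    choose a ha b hb hab using hp
    have t0 : 0 ≤ ⟪x - z, p₀ - 0⟫ := hA.1 x z p₀ 0 hp₀ hzA
    have hc : ∀ k, 0 ≤ ⟪a k - z, p k - 0⟫ := fun k =>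
      (hB k).1 (a k) z (p k) 0 (ha k) (hzB k)
    have hd : ∀ k, 0 ≤ ⟪b k - 0, p k - 0⟫ := fun k =>
      (hS k).1 (b k) 0 (p k) 0 (hb k) (h00 k)
    simp only [sub_zero] at t0 hc hd
    have key : ⟪x - z, p₀⟫ + ∑ k, (⟪a k - z, p k⟫ + ⟪b k, p k⟫) = 0 := by
      have step : ∀ k, ⟪a k - z, p k⟫ + ⟪b k, p k⟫ = ⟪x - z, p k⟫ := by
        intro k
        rw [← inner_add_left]
        congr 1
        rw [← hab k]
        abel
      simp only [step]
      rw [← inner_sum, ← inner_add_right, hsum, inner_zero_right]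
    have hnn : ∀ k ∈ Finset.univ, 0 ≤ ⟪a k - z, p k⟫ + ⟪b k, p k⟫ :=
      fun k _ => add_nonneg (hc k) (hd k)
    have hsum0 : ∑ k, (⟪a k - z, p k⟫ + ⟪b k, p k⟫) = 0 :=
      le_antisymm (by linarith) (Finset.sum_nonneg hnn)
    have heach := (Finset.sum_eq_zero_iff_of_nonneg hnn).mp hsum0
    have hp0 : ∀ k, p k = 0 := by
      intro k
      by_contra hne
      have hpos := hSstrict k (p k) 0 (b k) 0 (hb k) (h00 k) hne
      simp only [sub_zero] at hpos
      have hdz : ⟪b k, p k⟫ = 0 := by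
        have := heach k (Finset.mem_univ k)
        linarith [hc k, hd k]
      rw [real_inner_comm] at hpos
      linarith
    have hp₀0 : p₀ = 0 := by
      have : ∑ k, p k = 0 := Finset.sum_eq_zero fun k _ => hp0 k
      rw [this, add_zero] at hsum
      exact hsum
    refine ⟨hp₀0 ▸ hp₀, fun k => ?_⟩
    have hbk : b k = 0 := by
      have : b k ∈ opInv (S k) 0 := by
        show (0 : H) ∈ S k (b k)
        exact hp0 k ▸ hb k
      rw [hS0 k] at this
      exact this
    have hax : a k = x := by rw [← hab k, hbk, add_zero]
    have := ha k
    rw [hp0 k, hax] at this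
    exact this
  · rintro ⟨hxA, hxB⟩
    exact ⟨0, hxA, fun _ => 0, fun k => ⟨x, hxB k, 0, h00 k, add_zero x⟩, by simp⟩

end
end

section
/- Let H be a real Hilbert space, let A : H → 2^H and B_1,…,B_K : H → 2^H be monotone operators, and for each k let S_k : H → 2^H be such that S_k⁻¹ is single-valued and strictly monotone with S_k⁻¹(0) = 0. Let z ∈ (zer A) ∩ ⋂_k zer B_k and let x satisfy 0 ∈ A x + Σ_k (B_k □ S_k) x with witnesses p₀ ∈ A x and p_k = (B_k □ S_k) x, Σ_{k=0}^K p_k = 0. Then p_k = 0 for all k ∈ {0,…,K}, and consequently x ∈ zer A and x ∈ zer B_k for every k. -/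
open scoped RealInnerProductSpace

/-- Key step of Proposition 5.2: if `z` is a common zero of `A` and the `Bₖ`, and
`x` solves the relaxed inclusion `0 ∈ Ax + Σₖ (Bₖ □ Sₖ)x` with witnesses
`p₀ ∈ Ax`, `pₖ = (Bₖ □ Sₖ)x`, `Σ pₖ = 0`, then all `pₖ` vanish and `x` is a
common zero of `A` and the `Bₖ`. -/
theorem stmt9 {H : Type*} [NormedAddCommGroup H] [InnerProductSpace ℝ H] [CompleteSpace H]
    {K : ℕ}
    (A : H → Set H) (B : Fin K → H → Set H) (sinv : Fin K → H → H)
    (hA : ∀ x y u v, u ∈ A x → v ∈ A y → 0 ≤ ⟪x - y, u - v⟫)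
    (hB : ∀ k x y u v, u ∈ B k x → v ∈ B k y → 0 ≤ ⟪x - y, u - v⟫)
    (hstrict : ∀ k (u v : H), u ≠ v → 0 < ⟪u - v, sinv k u - sinv k v⟫)
    (hzero : ∀ k, sinv k 0 = 0)
    (z : H) (hzA : (0 : H) ∈ A z) (hzB : ∀ k, (0 : H) ∈ B k z)
    (x p₀ : H) (p : Fin K → H)
    (hp₀ : p₀ ∈ A x)
    (hp : ∀ k, p k ∈ B k (x - sinv k (p k)))
    (hsum : p₀ + ∑ k, p k = 0) :
    (p₀ = 0 ∧ ∀ k, p k = 0) ∧ (0 : H) ∈ A x ∧ ∀ k, (0 : H) ∈ B k x := by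
  -- each term ⟪p k, sinv k (p k)⟫ is nonnegative
  have hterm_nonneg : ∀ k, 0 ≤ ⟪p k, sinv k (p k)⟫ := by
    intro k
    by_cases h : p k = 0
    · simp [h, hzero k]
    · have := hstrict k (p k) 0 h
      simpa [hzero k] using this.le
  -- the sum of the terms is nonpositive
  have h0 : 0 ≤ ⟪x - z, p₀⟫ := by simpa using hA x z p₀ 0 hp₀ hzA
  have hk : ∀ k, 0 ≤ ⟪x - sinv k (p k) - z, p k⟫ := by
    intro k
    simpa using hB k (x - sinv k (p k)) z (p k) 0 (hp k) (hzB k)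
  have hsum_le : ∑ k, ⟪p k, sinv k (p k)⟫ ≤ 0 := by
    have hge : 0 ≤ ⟪x - z, p₀⟫ + ∑ k, ⟪x - sinv k (p k) - z, p k⟫ :=
      add_nonneg h0 (Finset.sum_nonneg fun k _ => hk k)
    have hexp : ⟪x - z, p₀⟫ + ∑ k, ⟪x - sinv k (p k) - z, p k⟫
        = ⟪x - z, p₀ + ∑ k, p k⟫ - ∑ k, ⟪p k, sinv k (p k)⟫ := by
      rw [inner_add_right, inner_sum]
      rw [add_sub_assoc]
      congr 1
      rw [← Finset.sum_sub_distrib]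
      refine Finset.sum_congr rfl fun k _ => ?_
      rw [sub_right_comm, inner_sub_left, real_inner_comm, real_inner_comm (sinv k (p k))]
    rw [hexp, hsum, inner_zero_right, zero_sub] at hge
    linarith
  have hsum_eq : ∑ k, ⟪p k, sinv k (p k)⟫ = 0 :=
    le_antisymm hsum_le (Finset.sum_nonneg fun k _ => hterm_nonneg k)
  have hterm_eq : ∀ k, ⟪p k, sinv k (p k)⟫ = 0 := by
    intro k
    have := (Finset.sum_eq_zero_iff_of_nonneg (fun k _ => hterm_nonneg k)).1 hsum_eq
    exact this k (Finset.mem_univ k)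
  have hpk : ∀ k, p k = 0 := by
    intro k
    by_contra h
    have := hstrict k (p k) 0 h
    rw [hzero k, sub_zero, sub_zero] at this
    exact absurd (hterm_eq k) (ne_of_gt this)
  have hp0 : p₀ = 0 := by
    have : ∑ k, p k = 0 := Finset.sum_eq_zero fun k _ => hpk k
    rw [this, add_zero] at hsum
    exact hsum
  refine ⟨⟨hp0, hpk⟩, hp0 ▸ hp₀, fun k => ?_⟩
  have := hp k
  rw [hpk k, hzero k, sub_zero] at this
  exact this
end
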